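/- Let 0 → A → E → B → 0 be an extension of C*-algebras and n ∈ ℕ. If A has property (Λ_n) and rr(B) ≤ n, then rr(E) ≤ n. -/

import Mathlib

open scoped MultiplierAlgebra

namespace RR

/-- `Lg_n(A)_sa` is dense in `A_sa^n`: every self-adjoint `n`-tuple can be approximated by a
self-adjoint unimodular `n`-tuple (one whose sum of squares is invertible). -/
def LgSaDense (A : Type*) [CStarAlgebra A] (n : ℕ) : Prop :=
  ∀ a : Fin n → A, (∀ i, IsSelfAdjoint (a i)) → ∀ ε : ℝ, 0 < ε →
    ∃ b : Fin n → A, (∀ i, IsSelfAdjoint (b i)) ∧ IsUnit (∑ i, b i ^ 2) ∧ ∀ i, ‖a i - b i‖ < ε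

/-- The real rank of a unital C*-algebra: the least `n` such that `Lg_{n+1}(A)_sa` is dense
in `A_sa^{n+1}` (`∞` if there is no such `n`). -/
noncomputable def uRealRank (A : Type*) [CStarAlgebra A] : ℕ∞ :=
  sInf {c : ℕ∞ | ∃ n : ℕ, c = n ∧ LgSaDense A (n + 1)}

/-- The real rank of a (possibly nonunital) C*-algebra, defined via its unitization.
(For unital `A` this agrees with `uRealRank A`, since `rr (A ⊕ ℂ) = rr A`.) -/
noncomputable def realRank (A : Type*) [NonUnitalCStarAlgebra A] : ℕ∞ :=
  uRealRank (Unitization ℂ A)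

/-- The canonical image of `A` as an ideal in its multiplier algebra `𝓜(ℂ, A)`. -/
noncomputable def mIdeal (A : Type*) [NonUnitalCStarAlgebra A] : Set 𝓜(ℂ, A) :=
  Set.range (DoubleCentralizer.coe ℂ : A → 𝓜(ℂ, A))

/-- Property `(Λ_n)`: every self-adjoint `(n+1)`-tuple in `M(A)` whose image in the corona
`M(A)/A` is unimodular (i.e. whose sum of squares is invertible modulo `A`) can be approximated
arbitrarily well, keeping the same image modulo `A`, by a unimodular self-adjoint tuple. -/
def Lambda (A : Type*) [NonUnitalCStarAlgebra A] (n : ℕ) : Prop :=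
  ∀ a : Fin (n + 1) → 𝓜(ℂ, A), (∀ i, IsSelfAdjoint (a i)) →
    (∃ c : 𝓜(ℂ, A), c * (∑ i, a i ^ 2) - 1 ∈ mIdeal A ∧ (∑ i, a i ^ 2) * c - 1 ∈ mIdeal A) →
    ∀ ε : ℝ, 0 < ε →
      ∃ b : Fin (n + 1) → 𝓜(ℂ, A), (∀ i, IsSelfAdjoint (b i)) ∧ IsUnit (∑ i, b i ^ 2) ∧
        ∀ i, ‖a i - b i‖ < ε ∧ a i - b i ∈ mIdeal A

/-- The extension real rank `xrr(A)`: the least `n` such that `A` has `(Λ_m)` for all `m ≥ n`. -/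
noncomputable def xrr (A : Type*) [NonUnitalCStarAlgebra A] : ℕ∞ :=
  sInf {c : ℕ∞ | ∃ n : ℕ, c = n ∧ ∀ m : ℕ, n ≤ m → Lambda A m}

end RR

/-!
Pass to unitizations, so that `Ẽ → B̃` is onto with kernel `A`, and let `σ : Ẽ → M(A)` record
the action of `Ẽ` on the ideal `A`. Given a self-adjoint tuple `x` in `Ẽ`, approximate its image
in `B̃` by a unimodular self-adjoint tuple `y` (as `rr(B) ≤ n`) and lift the difference with
control of norms: this gives a nearby self-adjoint `x'` with image `y`. Then `σ x'` is unimodular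
modulo `A`, so `(Λ_n)` provides a unimodular `b` close to `σ x'` with `σ x' - b ∈ A`. Subtracting
this element of `A` from `x'` yields a tuple with image `y` in `B̃` and `b` in `M(A)`. As
`Ẽ → B̃ × M(A)` is an injective *-homomorphism of C*-algebras, spectral permanence makes the sum
of squares of that tuple invertible.
-/

open scoped CStarAlgebra

namespace DoubleCentralizer

variable {A : Type*} [NonUnitalCStarAlgebra A]

lemma norm_coe (a : A) : ‖(a : 𝓜(ℂ, A))‖ = ‖a‖ := by
  rw [← norm_fst, coe_fst, ContinuousLinearMap.opNorm_mul_apply]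

lemma coe_injective : Function.Injective (DoubleCentralizer.coe ℂ : A → 𝓜(ℂ, A)) :=
  (AddMonoidHomClass.isometry_of_norm (coeHom (𝕜 := ℂ) (A := A)) norm_coe).injective

end DoubleCentralizer

namespace NonUnitalStarAlgHom

variable {A E : Type*} [NonUnitalCStarAlgebra A] [NonUnitalCStarAlgebra E]
  (ι : A →⋆ₙₐ[ℂ] E) (hι : Function.Injective ι)

noncomputable def restrictCLM (T : E →L[ℂ] E) (hT : ∀ a, T (ι a) ∈ Set.range ι) : A →L[ℂ] A :=
  LinearMap.mkContinuous
    ((LinearEquiv.ofInjective (ι : A →ₗ[ℂ] E) hι).symm.toLinearMap ∘ₗ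
      LinearMap.codRestrict _ ((T : E →ₗ[ℂ] E) ∘ₗ (ι : A →ₗ[ℂ] E)) hT)
    ‖T‖ fun a => by
      rw [← norm_map ι hι, ← norm_map ι hι a]
      exact (congrArg norm
        (LinearEquiv.ofInjective_symm_apply (f := (ι : A →ₗ[ℂ] E)) (h := hι) _)).trans_le
          (T.le_opNorm (ι a))

lemma apply_restrictCLM (T : E →L[ℂ] E) (hT : ∀ a, T (ι a) ∈ Set.range ι) (a : A) :
    ι (restrictCLM ι hι T hT a) = T (ι a) :=
  LinearEquiv.ofInjective_symm_apply (f := (ι : A →ₗ[ℂ] E)) (h := hι) _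

end NonUnitalStarAlgHom

section IdealMultiplier

variable {A E : Type*} [NonUnitalCStarAlgebra A] [NonUnitalCStarAlgebra E]
  (ι : A →⋆ₙₐ[ℂ] E) (hι : Function.Injective ι)
  (hL : ∀ (e : E) (a : A), e * ι a ∈ Set.range ι) (hR : ∀ (e : E) (a : A), ι a * e ∈ Set.range ι)

open NonUnitalStarAlgHom in
noncomputable def idealToMultiplier : E →⋆ₙₐ[ℂ] 𝓜(ℂ, A) where
  toFun e :=
    { fst := restrictCLM ι hι (ContinuousLinearMap.mul ℂ E e) fun a => by simpa using hL e a
      snd := restrictCLM ι hι ((ContinuousLinearMap.mul ℂ E).flip e) fun a => by simpa using hR e a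
      central := fun x y => hι <| by simp [apply_restrictCLM, mul_assoc] }
  map_smul' c e := by ext x <;> apply hι <;> simp [apply_restrictCLM]
  map_zero' := by ext x <;> apply hι <;> simp [apply_restrictCLM]
  map_add' e f := by ext x <;> apply hι <;> simp [apply_restrictCLM]
  map_mul' e f := by ext x <;> apply hι <;> simp [apply_restrictCLM, mul_assoc]
  map_star' e := by
    ext x <;> apply hι <;>
      simp [apply_restrictCLM, DoubleCentralizer.star_fst, DoubleCentralizer.star_snd, map_star]

lemma idealToMultiplier_apply (a : A) :
    idealToMultiplier ι hι hL hR (ι a) = a := by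
  ext x <;> apply hι <;> simp [idealToMultiplier, NonUnitalStarAlgHom.apply_restrictCLM]

end IdealMultiplier

lemma IsSelfAdjoint.isUnit_of_isUnit_map {F D D' : Type*} [CStarAlgebra D] [CStarAlgebra D']
    [FunLike F D D'] [AlgHomClass F ℂ D D'] [StarHomClass F D D'] {s : D} (hs : IsSelfAdjoint s)
    (φ : F) (hφ : Function.Injective φ) (h : IsUnit (φ s)) : IsUnit s := by
  rw [← spectrum.zero_notMem_iff ℝ, ← hs.map_spectrum_real φ hφ, spectrum.zero_notMem_iff]
  exact h

lemma StarAlgHom.exists_isSelfAdjoint_apply_eq_norm_le {D D' : Type*} [CStarAlgebra D]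
    [CStarAlgebra D'] {φ : D →⋆ₐ[ℂ] D'} (hφ : Function.Surjective φ) {w : D'}
    (hw : IsSelfAdjoint w) :
    ∃ d : D, IsSelfAdjoint d ∧ φ d = w ∧ ‖d‖ ≤ ‖w‖ := by
  obtain ⟨z, rfl⟩ := hφ w
  have hre : φ (realPart z : D) = φ z := by
    rw [map_realPart, hw.coe_realPart]
  -- `f` is the identity on the spectrum of `φ z` and is bounded by `‖φ z‖`
  set f : ℝ → ℝ := fun t => max (-‖φ z‖) (min ‖φ z‖ t)
  refine ⟨cfc f (realPart z : D), cfc_predicate f _, ?_, ?_⟩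
  · refine (StarAlgHomClass.map_cfc φ f _ (by fun_prop) (map_continuous φ) (realPart z).2
      (hre ▸ hw)).trans ?_
    rw [hre]
    nontriviality D'
    refine (cfc_congr fun x hx => ?_).trans (cfc_id' ℝ (φ z))
    have hx' : |x| ≤ ‖φ z‖ := spectrum.norm_le_norm_of_mem hx
    simp only [f, min_eq_right (abs_le.1 hx').2, max_eq_right (abs_le.1 hx').1]
  · refine norm_cfc_le (norm_nonneg _) fun x _ => ?_
    rw [Real.norm_eq_abs, abs_le]
    exact ⟨le_max_left _ _, max_le (neg_le_self (norm_nonneg _)) (min_le_left _ _)⟩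

namespace RR

variable {D : Type*} [CStarAlgebra D]

lemma isUnit_sum_sq_add_sq {k : ℕ} {c : Fin k → D} (hc : ∀ i, IsSelfAdjoint (c i))
    (hunit : IsUnit (∑ i, c i ^ 2)) {a : D} (ha : IsSelfAdjoint a) :
    IsUnit (∑ i, c i ^ 2 + a ^ 2) := by
  let _ := CStarAlgebra.spectralOrder D
  have := CStarAlgebra.spectralOrderedRing D
  have sq_nonneg {x : D} (hx : IsSelfAdjoint x) : 0 ≤ x ^ 2 := by
    simpa [hx.star_eq, sq] using star_mul_self_nonneg x
  exact ((hunit.isStrictlyPositive (Finset.sum_nonneg fun i _ => sq_nonneg (hc i))).add_nonneg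
    (sq_nonneg ha)).isUnit

lemma LgSaDense.succ {k : ℕ} (h : LgSaDense D k) : LgSaDense D (k + 1) := by
  intro a ha ε hε
  obtain ⟨c, hc_sa, hc_unit, hc_near⟩ := h (fun i => a i.castSucc) (fun i => ha _) ε hε
  refine ⟨Fin.snoc c (a (Fin.last k)), Fin.lastCases (by simpa using ha _) (by simpa using hc_sa),
    ?_, Fin.lastCases (by simpa using hε) (by simpa using hc_near)⟩
  simpa [Fin.sum_univ_castSucc] using isUnit_sum_sq_add_sq hc_sa hc_unit (ha (Fin.last k))

lemma LgSaDense.mono {m k : ℕ} (hmk : m ≤ k) (h : LgSaDense D m) : LgSaDense D k := by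
  induction k, hmk using Nat.le_induction with
  | base => exact h
  | succ k _ ih => exact ih.succ

lemma lgSaDense_of_uRealRank_le {n : ℕ} (h : uRealRank D ≤ n) : LgSaDense D (n + 1) := by
  set S := {c : ℕ∞ | ∃ m : ℕ, c = m ∧ LgSaDense D (m + 1)}
  have hS : S.Nonempty := Set.nonempty_iff_ne_empty.2 fun hS => by
    simp [uRealRank, S, hS] at h
  obtain ⟨m, hm, hdense⟩ : sInf S ∈ S := csInf_mem hS
  have hmn : (m : ℕ∞) ≤ n := by rw [← hm]; exact h
  norm_cast at hmn
  exact hdense.mono (by omega)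

section Extension

variable {A D D₁ : Type*} [NonUnitalCStarAlgebra A] [CStarAlgebra D] [CStarAlgebra D₁]
  {π : D →⋆ₐ[ℂ] D₁} {σ : D →⋆ₐ[ℂ] 𝓜(ℂ, A)} {j : A →⋆ₙₐ[ℂ] D}

lemma injective_prod_of_ker_eq_range (hker : ∀ z, π z = 0 ↔ z ∈ Set.range j)
    (hσj : ∀ a, σ (j a) = a) : Function.Injective (π.prod σ) := by
  refine (injective_iff_map_eq_zero (π.prod σ)).2 fun z hz => ?_
  obtain ⟨hπz, hσz⟩ : π z = 0 ∧ σ z = 0 := by simpa [Prod.ext_iff] using hz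
  obtain ⟨a, rfl⟩ := (hker z).1 hπz
  have ha : ‖a‖ = 0 := by rw [← DoubleCentralizer.norm_coe, ← hσj, hσz, norm_zero]
  rw [norm_eq_zero.1 ha, map_zero]

lemma isUnit_of_ker_eq_range (hker : ∀ z, π z = 0 ↔ z ∈ Set.range j)
    (hσj : ∀ a, σ (j a) = a) {s : D} (hs : IsSelfAdjoint s) (hπs : IsUnit (π s))
    (hσs : IsUnit (σ s)) : IsUnit s :=
  hs.isUnit_of_isUnit_map _ (injective_prod_of_ker_eq_range hker hσj)
    (Prod.isUnit_iff.2 ⟨hπs, hσs⟩)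

lemma exists_inverse_mod_mIdeal (hπ : Function.Surjective π)
    (hker : ∀ z, π z = 0 ↔ z ∈ Set.range j) (hσj : ∀ a, σ (j a) = a) {s : D}
    (hs : IsUnit (π s)) : ∃ c, c * σ s - 1 ∈ mIdeal A ∧ σ s * c - 1 ∈ mIdeal A := by
  have hmem {z : D} (hz : π z = 0) : σ z ∈ mIdeal A := by
    obtain ⟨a, rfl⟩ := (hker z).1 hz
    exact ⟨a, (hσj a).symm⟩
  obtain ⟨t, ht⟩ := hπ ↑hs.unit⁻¹
  refine ⟨σ t, ?_, ?_⟩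
  · simpa using hmem (z := t * s - 1) (by simp [ht])
  · simpa using hmem (z := s * t - 1) (by simp [ht])

lemma exists_isUnit_sum_sq_near_of_lambda (hπ : Function.Surjective π)
    (hker : ∀ z, π z = 0 ↔ z ∈ Set.range j) (hσj : ∀ a, σ (j a) = a) {n : ℕ}
    (hΛ : Lambda A n) {x : Fin (n + 1) → D} (hx : ∀ i, IsSelfAdjoint (x i))
    (hunit : IsUnit (π (∑ i, x i ^ 2))) {ε : ℝ} (hε : 0 < ε) :
    ∃ x' : Fin (n + 1) → D, (∀ i, IsSelfAdjoint (x' i)) ∧ IsUnit (∑ i, x' i ^ 2) ∧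
      ∀ i, ‖x i - x' i‖ < ε := by
  obtain ⟨b, hb_sa, hb_unit, hb⟩ := hΛ (fun i => σ (x i)) (fun i => (hx i).map σ)
    (by simpa only [map_sum, map_pow] using exists_inverse_mod_mIdeal hπ hker hσj hunit) ε hε
  choose w hw using fun i => (hb i).2
  have hw_sa (i : Fin (n + 1)) : IsSelfAdjoint (w i) := DoubleCentralizer.coe_injective <| by
    have := map_star (DoubleCentralizer.coeHom (𝕜 := ℂ) (A := A)) (w i)
    simp only [DoubleCentralizer.coeHom_apply] at this
    rw [this, hw i, (((hx i).map σ).sub (hb_sa i)).star_eq]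
  have hj_norm (a : A) : ‖j a‖ = ‖a‖ := by
    refine NonUnitalStarAlgHom.norm_map j (fun a b hab => ?_) a
    exact DoubleCentralizer.coe_injective (by rw [← hσj, ← hσj, hab])
  have hπj (a : A) : π (j a) = 0 := (hker _).2 ⟨a, rfl⟩
  refine ⟨fun i => x i - j (w i), fun i => (hx i).sub ((hw_sa i).map j), ?_, fun i => ?_⟩
  · refine isUnit_of_ker_eq_range hker hσj
      (isSelfAdjoint_sum _ fun i _ => ((hx i).sub ((hw_sa i).map j)).pow 2) ?_ ?_
    · simpa [hπj] using hunit
    · simpa [hσj, hw] using hb_unit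
  · rw [sub_sub_cancel, hj_norm, ← DoubleCentralizer.norm_coe, hw]
    exact (hb i).1

lemma lgSaDense_of_lambda (hπ : Function.Surjective π)
    (hker : ∀ z, π z = 0 ↔ z ∈ Set.range j) (hσj : ∀ a, σ (j a) = a) {n : ℕ}
    (hΛ : Lambda A n) (hD₁ : LgSaDense D₁ (n + 1)) : LgSaDense D (n + 1) := by
  intro x hx ε hε
  obtain ⟨y, hy_sa, hy_unit, hy_near⟩ :=
    hD₁ (fun i => π (x i)) (fun i => (hx i).map π) (ε / 2) (half_pos hε)
  choose d hd_sa hd_map hd_norm using fun i =>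
    StarAlgHom.exists_isSelfAdjoint_apply_eq_norm_le hπ ((hy_sa i).sub ((hx i).map π))
  obtain ⟨x', hx'_sa, hx'_unit, hx'_near⟩ := exists_isUnit_sum_sq_near_of_lambda hπ hker hσj hΛ
    (x := fun i => x i + d i) (fun i => (hx i).add (hd_sa i)) (by simpa [hd_map] using hy_unit)
    (half_pos hε)
  refine ⟨x', hx'_sa, hx'_unit, fun i => ?_⟩
  have hd_small : ‖d i‖ < ε / 2 := (hd_norm i).trans_lt (norm_sub_rev (y i) _ ▸ hy_near i)
  calc ‖x i - x' i‖ = ‖(x i + d i - x' i) - d i‖ := by congr 1; abel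
    _ ≤ ‖x i + d i - x' i‖ + ‖d i‖ := norm_sub_le _ _
    _ < ε / 2 + ε / 2 := add_lt_add (hx'_near i) hd_small
    _ = ε := add_halves ε

end Extension

end RR

lemma Unitization.starLift_apply_inr {E M : Type*} [NonUnitalCStarAlgebra E] [CStarAlgebra M]
    (φ : E →⋆ₙₐ[ℂ] M) (e : E) : starLift φ e = φ e :=
  DFunLike.congr_fun (starLift.symm_apply_apply φ) e

lemma Unitization.starMap_eq_zero_iff {A E B : Type*} [NonUnitalCStarAlgebra A]
    [NonUnitalCStarAlgebra E] [NonUnitalCStarAlgebra B] {ι : A →⋆ₙₐ[ℂ] E} {π : E →⋆ₙₐ[ℂ] B}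
    (hexact : ∀ x : E, π x = 0 ↔ x ∈ Set.range ι) (z : Unitization ℂ E) :
    starMap π z = 0 ↔ z ∈ Set.range ((inrNonUnitalStarAlgHom ℂ E).comp ι) := by
  induction z using Unitization.ind with
  | inl_add_inr r e =>
    simp [Unitization.ext_iff, Unitization.algebraMap_eq_inl, hexact, eq_comm (a := (0 : ℂ))]

/-- For an extension `0 → A → E → B → 0`, if `A` has `(Λ_n)` and
`rr(B) ≤ n`, then `rr(E) ≤ n`. -/
theorem realRank_extension_le_of_lambda (A E B : Type*) [NonUnitalCStarAlgebra A]
    [NonUnitalCStarAlgebra E] [NonUnitalCStarAlgebra B]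
    (ι : A →⋆ₙₐ[ℂ] E) (π : E →⋆ₙₐ[ℂ] B)
    (hι : Function.Injective ι) (hπ : Function.Surjective π)
    (hexact : ∀ x : E, π x = 0 ↔ x ∈ Set.range ι)
    (n : ℕ) (hΛ : RR.Lambda A n) (hB : RR.realRank B ≤ n) :
    RR.realRank E ≤ n := by
  have hL (e : E) (a : A) : e * ι a ∈ Set.range ι :=
    (hexact _).1 (by rw [map_mul, (hexact _).2 ⟨a, rfl⟩, mul_zero])
  have hR (e : E) (a : A) : ι a * e ∈ Set.range ι :=
    (hexact _).1 (by rw [map_mul, (hexact _).2 ⟨a, rfl⟩, zero_mul])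
  have hdense : RR.LgSaDense (Unitization ℂ E) (n + 1) :=
    RR.lgSaDense_of_lambda (π := Unitization.starMap π)
      (σ := Unitization.starLift (idealToMultiplier ι hι hL hR))
      (j := (Unitization.inrNonUnitalStarAlgHom ℂ E).comp ι) (Unitization.starMap_surjective hπ)
      (Unitization.starMap_eq_zero_iff hexact)
      (fun a => (Unitization.starLift_apply_inr _ _).trans (idealToMultiplier_apply ι hι hL hR a))
      hΛ (RR.lgSaDense_of_uRealRank_le hB)
  exact sInf_le ⟨n, rfl, hdense⟩
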